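/- Let 𝒜 be an m-order n-dimensional strong M-tensor with a_{ii…i} = 1 for all i, let b ∈ ℝⁿ with b > 0 entrywise, let 1 ≤ s,k ≤ n−1, and let α_i ∈ [0,1] for i = 1,…,n−s and β_j ∈ [0,1] for j = k+1,…,n. Then the preconditioned multilinear system 𝒜_{αβ}(s,k)x^{m−1} = P_{αβ}(s,k)b has a unique positive solution x > 0, and this solution coincides with the unique positive solution of 𝒜x^{m−1} = b. -/

import Mathlib

open scoped BigOperators

namespace MultilinearPaper

noncomputable section

/-- An `m`-order `n`-dimensional real tensor: the first index is separated and
the remaining `m - 1` indices are given as a function `Fin (m-1) → Fin n`. -/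
abbrev Tensor (m n : ℕ) : Type := Fin n → (Fin (m - 1) → Fin n) → ℝ

variable {m n : ℕ}

/-- The vector `𝒜 x^{m-1}` (real version):
`(𝒜 x^{m-1})_i = ∑_{i₂,…,i_m} a_{i i₂ … i_m} x_{i₂} ⋯ x_{i_m}`. -/
def tmul (A : Tensor m n) (x : Fin n → ℝ) : Fin n → ℝ :=
  fun i => ∑ f : Fin (m - 1) → Fin n, A i f * ∏ t, x (f t)

/-- The vector `𝒜 x^{m-1}` evaluated at a complex vector. -/
def tmulC (A : Tensor m n) (x : Fin n → ℂ) : Fin n → ℂ :=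
  fun i => ∑ f : Fin (m - 1) → Fin n, (A i f : ℂ) * ∏ t, x (f t)

/-- The identity tensor `𝓘`. -/
def idT (m n : ℕ) : Tensor m n :=
  fun i f => if ∀ t, f t = i then 1 else 0

/-- Entrywise nonnegativity of a tensor. -/
def TNonneg (A : Tensor m n) : Prop := ∀ i f, 0 ≤ A i f

/-- `lam` is an eigenvalue of `A`: there is `x ≠ 0` over `ℂ` with
`𝒜 x^{m-1} = lam • x^{[m-1]}`. -/
def IsEigenvalue (A : Tensor m n) (lam : ℂ) : Prop :=
  ∃ x : Fin n → ℂ, x ≠ 0 ∧ ∀ i, tmulC A x i = lam * (x i) ^ (m - 1)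

/-- Spectral radius: supremum of moduli of eigenvalues. -/
def rho (A : Tensor m n) : ℝ :=
  sSup {r : ℝ | ∃ lam : ℂ, IsEigenvalue A lam ∧ r = ‖lam‖}

/-- `A` is a strong M-tensor: `A = η 𝓘 - B` with `B ≥ 0` and `η > ρ(B)`. -/
def StrongM (A : Tensor m n) : Prop :=
  ∃ (η : ℝ) (B : Tensor m n), TNonneg B ∧ rho B < η ∧ A = η • idT m n - B

/-- Matrix–tensor product `(P𝓑)_{j i₂…i_m} = ∑_{j₂} P_{j j₂} b_{j₂ i₂ … i_m}`. -/
def mmul (P : Matrix (Fin n) (Fin n) ℝ) (A : Tensor m n) : Tensor m n :=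
  fun j f => ∑ j₂, P j j₂ * A j₂ f

/-- Majorization matrix `M(𝒜)_{ij} = a_{i j … j}`. -/
def maj (A : Tensor m n) : Matrix (Fin n) (Fin n) ℝ :=
  fun i j => A i (fun _ => j)

/-- `a_{i i … i} = 1` for all `i`. -/
def UnitDiag (A : Tensor m n) : Prop := ∀ i, A i (fun _ => i) = 1

/-- `L`: the negatives of the strictly lower triangular entries of `M(𝒜)`. -/
def Lmat (A : Tensor m n) : Matrix (Fin n) (Fin n) ℝ :=
  fun i j => if (j : ℕ) < (i : ℕ) then -maj A i j else 0

/-- `𝓛 = L𝓘`. -/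
def Ltens (A : Tensor m n) : Tensor m n := mmul (Lmat A) (idT m n)

/-- `𝓕 = 𝓘 - 𝓛 - 𝒜`. -/
def Ftens (A : Tensor m n) : Tensor m n := idT m n - Ltens A - A

/-- The matrix `S_α^s`, with `(S_α^s)_{i,i+s} = -α_i a_{i(i+s)…(i+s)}`. -/
def Smat (A : Tensor m n) (α : Fin n → ℝ) (s : ℕ) : Matrix (Fin n) (Fin n) ℝ :=
  fun i j => if (j : ℕ) = (i : ℕ) + s then -(α i * maj A i j) else 0

/-- The matrix `K_β^k`, with `(K_β^k)_{i,i-k} = -β_i a_{i(i-k)…(i-k)}`. -/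
def Kmat (A : Tensor m n) (β : Fin n → ℝ) (k : ℕ) : Matrix (Fin n) (Fin n) ℝ :=
  fun i j => if (i : ℕ) = (j : ℕ) + k then -(β i * maj A i j) else 0

/-- The preconditioner `P_{αβ}(s,k) = I + S_α^s + K_β^k`. -/
def Pmat (A : Tensor m n) (α β : Fin n → ℝ) (s k : ℕ) : Matrix (Fin n) (Fin n) ℝ :=
  1 + Smat A α s + Kmat A β k

/-- The preconditioned tensor `𝒜_{αβ}(s,k) = P_{αβ}(s,k) 𝒜`. -/
def precond (A : Tensor m n) (α β : Fin n → ℝ) (s k : ℕ) : Tensor m n :=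
  mmul (Pmat A α β s k) A

/- Jacobi-type splittings. -/

def E1 (A : Tensor m n) (α β : Fin n → ℝ) (s k : ℕ) : Tensor m n :=
  mmul (Pmat A α β s k) (idT m n)

def F1 (A : Tensor m n) (α β : Fin n → ℝ) (s k : ℕ) : Tensor m n :=
  mmul (Pmat A α β s k) (Ltens A + Ftens A)

def F2 (A : Tensor m n) (α β : Fin n → ℝ) (s k : ℕ) : Tensor m n :=
  mmul (Pmat A α β s k) (Ltens A + Ftens A) - mmul (Smat A α s + Kmat A β k) (idT m n)

def F3 (A : Tensor m n) (α : Fin n → ℝ) (s : ℕ) : Tensor m n :=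
  mmul (1 + Smat A α s) (Ltens A + Ftens A) - mmul (Smat A α s) (idT m n)

def F4 (A : Tensor m n) (β : Fin n → ℝ) (k : ℕ) : Tensor m n :=
  mmul (1 + Kmat A β k) (Ltens A + Ftens A) - mmul (Kmat A β k) (idT m n)

/-- `S`: the matrix `S_α^1` with all parameters equal to `1`. -/
def Sfull (A : Tensor m n) : Matrix (Fin n) (Fin n) ℝ := Smat A (fun _ => 1) 1

/-- `K`: the matrix `K_β^1` with all parameters equal to `1`. -/
def Kfull (A : Tensor m n) : Matrix (Fin n) (Fin n) ℝ := Kmat A (fun _ => 1) 1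

/-- `𝓛′` with `𝓛 = K𝓘 + 𝓛′`. -/
def Lprime (A : Tensor m n) : Tensor m n := Ltens A - mmul (Kfull A) (idT m n)

/-- `𝓕′` with `𝓕 = S𝓘 + 𝓕′`. -/
def Fprime (A : Tensor m n) : Tensor m n := Ftens A - mmul (Sfull A) (idT m n)

/-- `ℰ₅ = (I - S_α K - K_β S)𝓘`. -/
def E5 (A : Tensor m n) (α β : Fin n → ℝ) : Tensor m n :=
  mmul (1 - Smat A α 1 * Kfull A - Kmat A β 1 * Sfull A) (idT m n)

/-- `ℱ₅ = 𝓛 + 𝓕 - (S_α + K_β)𝓘 + S_α(𝓛′ + 𝓕) + K_β(𝓛 + 𝓕′)`. -/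
def F5 (A : Tensor m n) (α β : Fin n → ℝ) : Tensor m n :=
  Ltens A + Ftens A - mmul (Smat A α 1 + Kmat A β 1) (idT m n)
    + mmul (Smat A α 1) (Lprime A + Ftens A) + mmul (Kmat A β 1) (Ltens A + Fprime A)

def finShiftUp (i : Fin n) (s : ℕ) (h : (i : ℕ) + s < n) : Fin n := ⟨(i : ℕ) + s, h⟩

def finShiftDown (i : Fin n) (k : ℕ) : Fin n :=
  ⟨(i : ℕ) - k, lt_of_le_of_lt (Nat.sub_le _ _) i.isLt⟩

/-- The `i`-th quantity appearing in conditions (7) and (11):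
`α_i a_{i(i+k)…(i+k)} a_{(i+k)i…i} + β_i a_{i(i-k)…(i-k)} a_{(i-k)i…i}`,
with each term dropped when its index is out of range. -/
def condExpr (A : Tensor m n) (α β : Fin n → ℝ) (k : ℕ) (i : Fin n) : ℝ :=
  (if h : (i : ℕ) + k < n then
      α i * maj A i (finShiftUp i k h) * maj A (finShiftUp i k h) i
    else 0) +
  (if k ≤ (i : ℕ) then
      β i * maj A i (finShiftDown i k) * maj A (finShiftDown i k) i
    else 0)

/-- Conditions (7) (for `k = 1`) and (11) (for general `k = s`). -/
def Cond (A : Tensor m n) (α β : Fin n → ℝ) (k : ℕ) : Prop :=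
  ∀ i : Fin n, 0 < condExpr A α β k i ∧ condExpr A α β k i < 1

/- Gauss–Seidel-type splittings. -/

/-- The diagonal part of `M(T)` as a matrix. -/
def DmatOf (T : Tensor m n) : Matrix (Fin n) (Fin n) ℝ :=
  fun i j => if i = j then maj T i j else 0

/-- The strictly lower triangular part of `M(T)` as a matrix. -/
def LmatOf (T : Tensor m n) : Matrix (Fin n) (Fin n) ℝ :=
  fun i j => if (j : ℕ) < (i : ℕ) then maj T i j else 0

/-- `𝓓_α = D_α 𝓘` from `S_α^s 𝓛 = 𝓓_α + 𝓛_α + 𝓕_α`. -/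
def Dalpha (A : Tensor m n) (α : Fin n → ℝ) (s : ℕ) : Tensor m n :=
  mmul (DmatOf (mmul (Smat A α s) (Ltens A))) (idT m n)

def Lalpha (A : Tensor m n) (α : Fin n → ℝ) (s : ℕ) : Tensor m n :=
  mmul (LmatOf (mmul (Smat A α s) (Ltens A))) (idT m n)

def Falpha (A : Tensor m n) (α : Fin n → ℝ) (s : ℕ) : Tensor m n :=
  mmul (Smat A α s) (Ltens A) - Dalpha A α s - Lalpha A α s

/-- `𝓓_β = D_β 𝓘` from `K_β^k 𝓕 = 𝓓_β + 𝓛_β + 𝓕_β`. -/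
def Dbeta (A : Tensor m n) (β : Fin n → ℝ) (k : ℕ) : Tensor m n :=
  mmul (DmatOf (mmul (Kmat A β k) (Ftens A))) (idT m n)

def Lbeta (A : Tensor m n) (β : Fin n → ℝ) (k : ℕ) : Tensor m n :=
  mmul (LmatOf (mmul (Kmat A β k) (Ftens A))) (idT m n)

def Fbeta (A : Tensor m n) (β : Fin n → ℝ) (k : ℕ) : Tensor m n :=
  mmul (Kmat A β k) (Ftens A) - Dbeta A β k - Lbeta A β k

def M1 (A : Tensor m n) (α β : Fin n → ℝ) (s k : ℕ) : Tensor m n :=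
  mmul (Pmat A α β s k) (idT m n - Ltens A)

def N1 (A : Tensor m n) (α β : Fin n → ℝ) (s k : ℕ) : Tensor m n :=
  mmul (Pmat A α β s k) (Ftens A)

def M2 (A : Tensor m n) (α β : Fin n → ℝ) (s k : ℕ) : Tensor m n :=
  idT m n - Ltens A + mmul (Kmat A β k) (idT m n) - mmul (Kmat A β k) (Ltens A)
    - Dalpha A α s - Lalpha A α s - Dbeta A β k - Lbeta A β k

def N2 (A : Tensor m n) (α β : Fin n → ℝ) (s k : ℕ) : Tensor m n :=
  Ftens A - mmul (Smat A α s) (idT m n) + mmul (Smat A α s) (Ftens A)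
    + Falpha A α s + Fbeta A β k

def M3 (A : Tensor m n) (α : Fin n → ℝ) (s : ℕ) : Tensor m n :=
  idT m n - Ltens A - Dalpha A α s - Lalpha A α s

def N3 (A : Tensor m n) (α : Fin n → ℝ) (s : ℕ) : Tensor m n :=
  Ftens A - mmul (Smat A α s) (idT m n) + mmul (Smat A α s) (Ftens A) + Falpha A α s

def M4 (A : Tensor m n) (β : Fin n → ℝ) (k : ℕ) : Tensor m n :=
  mmul (1 + Kmat A β k) (idT m n - Ltens A) - Dbeta A β k - Lbeta A β k

def N4 (A : Tensor m n) (β : Fin n → ℝ) (k : ℕ) : Tensor m n :=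
  Ftens A + Fbeta A β k

/- Preconditioned SOR. -/

def Dab (A : Tensor m n) (α β : Fin n → ℝ) (s k : ℕ) : Tensor m n :=
  idT m n - Dalpha A α s - Dbeta A β k

def Lab (A : Tensor m n) (α β : Fin n → ℝ) (s k : ℕ) : Tensor m n :=
  Ltens A - mmul (Kmat A β k) (idT m n) + mmul (Kmat A β k) (Ltens A)
    + Lalpha A α s + Lbeta A β k

def Fab (A : Tensor m n) (α β : Fin n → ℝ) (s k : ℕ) : Tensor m n :=
  Ftens A - mmul (Smat A α s) (idT m n) + mmul (Smat A α s) (Ftens A)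
    + Falpha A α s + Fbeta A β k

def Eomega (A : Tensor m n) (α β : Fin n → ℝ) (s k : ℕ) (ω : ℝ) : Tensor m n :=
  (1 / ω) • (Dab A α β s k - ω • Lab A α β s k)

def Fomega (A : Tensor m n) (α β : Fin n → ℝ) (s k : ℕ) (ω : ℝ) : Tensor m n :=
  (1 / ω) • ((1 - ω) • Dab A α β s k + ω • Fab A α β s k)

/-- Preconditioned SOR iteration tensor `ℋ_{αβ}(ω)`. -/
def Hsor (A : Tensor m n) (α β : Fin n → ℝ) (s k : ℕ) (ω : ℝ) : Tensor m n :=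
  mmul (maj (Eomega A α β s k ω))⁻¹ (Fomega A α β s k ω)

/-- Unpreconditioned SOR iteration tensor `ℋ(ω) = M(𝓘-ω𝓛)^{-1}((1-ω)𝓘+ω𝓕)`. -/
def Hu (A : Tensor m n) (ω : ℝ) : Tensor m n :=
  mmul (maj (idT m n - ω • Ltens A))⁻¹ ((1 - ω) • idT m n + ω • Ftens A)

/-- A tensor is reducible if there is a nonempty proper index subset `I` with
`a_{i₁ i₂ … i_m} = 0` whenever `i₁ ∈ I` and `i₂, …, i_m ∉ I`. -/
def TReducible (A : Tensor m n) : Prop :=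
  ∃ I : Set (Fin n), I.Nonempty ∧ I ≠ Set.univ ∧
    ∀ i f, i ∈ I → (∀ t, f t ∉ I) → A i f = 0

section Aux

variable {m n : ℕ}

lemma fin_card_prod (hm : 2 ≤ m) (r : ℝ) : (∏ _t : Fin (m-1), r) = r ^ (m-1) := by
  simp [Finset.prod_const]

lemma forall_eq_iff_const {i : Fin n} (f : Fin (m-1) → Fin n) :
    (∀ t, f t = i) ↔ f = (fun _ => i) := by
  constructor
  · intro h; funext t; exact h t
  · intro h t; rw [h]

lemma tmul_idT (hm : 2 ≤ m) (x : Fin n → ℝ) (i : Fin n) :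
    tmul (idT m n) x i = x i ^ (m-1) := by
  unfold tmul idT
  simp_rw [forall_eq_iff_const, ite_mul, one_mul, zero_mul]
  rw [Finset.sum_ite_eq' Finset.univ (fun _ => i) (fun f => ∏ t, x (f t))]
  simp [Finset.prod_const]

lemma tmul_decomp (hm : 2 ≤ m) {η : ℝ} {A B : Tensor m n}
    (hAB : A = η • idT m n - B) (x : Fin n → ℝ) (i : Fin n) :
    tmul A x i = η * x i ^ (m-1) - tmul B x i := by
  subst hAB
  unfold tmul
  have : ∀ f : Fin (m-1) → Fin n,
      (η • idT m n - B) i f * ∏ t, x (f t)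
        = η * (idT m n i f * ∏ t, x (f t)) - B i f * ∏ t, x (f t) := by
    intro f
    simp only [Pi.sub_apply, Pi.smul_apply, smul_eq_mul]
    ring
  rw [Finset.sum_congr rfl (fun f _ => this f), Finset.sum_sub_distrib, ← Finset.mul_sum]
  have := tmul_idT hm x i
  unfold tmul at this
  rw [this]

lemma tmul_mmul (P : Matrix (Fin n) (Fin n) ℝ) (A : Tensor m n) (x : Fin n → ℝ) (i : Fin n) :
    tmul (mmul P A) x i = ∑ j, P i j * tmul A x j := by
  unfold tmul mmul
  simp_rw [Finset.sum_mul, Finset.mul_sum]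
  rw [Finset.sum_comm]
  congr 1; funext j; congr 1; funext f; ring

lemma tmul_nonneg {B : Tensor m n} (hB : TNonneg B) {x : Fin n → ℝ}
    (hx : ∀ i, 0 ≤ x i) (i : Fin n) : 0 ≤ tmul B x i := by
  apply Finset.sum_nonneg
  intro f _
  exact mul_nonneg (hB i f) (Finset.prod_nonneg fun t _ => hx _)

lemma tmul_mono {B : Tensor m n} (hB : TNonneg B) {x y : Fin n → ℝ}
    (hx : ∀ i, 0 ≤ x i) (hxy : ∀ i, x i ≤ y i) (i : Fin n) :
    tmul B x i ≤ tmul B y i := by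
  apply Finset.sum_le_sum
  intro f _
  apply mul_le_mul_of_nonneg_left _ (hB i f)
  exact Finset.prod_le_prod (fun t _ => hx _) (fun t _ => hxy _)

lemma tmul_smul_vec (B : Tensor m n) (a : ℝ) (x : Fin n → ℝ) (i : Fin n) :
    tmul B (a • x) i = a ^ (m-1) * tmul B x i := by
  unfold tmul
  rw [Finset.mul_sum]
  congr 1; funext f
  simp only [Pi.smul_apply, smul_eq_mul]
  rw [Finset.prod_mul_distrib, Finset.prod_const]
  simp
  ring

lemma continuous_tmul (B : Tensor m n) (i : Fin n) :
    Continuous (fun x : Fin n → ℝ => tmul B x i) := by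
  unfold tmul
  apply continuous_finset_sum
  intro f _
  exact (continuous_const.mul (continuous_finset_prod _ fun t _ => continuous_apply _))

end Aux
section Eig

variable {m n : ℕ}

lemma bddAbove_eigset (B : Tensor m n) :
    BddAbove {r : ℝ | ∃ lam : ℂ, IsEigenvalue B lam ∧ r = ‖lam‖} := by
  rcases Nat.eq_zero_or_pos n with h0 | hpos
  · refine ⟨0, ?_⟩
    rintro r ⟨lam, ⟨x, hx0, _⟩, rfl⟩
    exfalso
    apply hx0
    funext i
    exact absurd i.isLt (by omega)
  · haveI : Nonempty (Fin n) := ⟨⟨0, hpos⟩⟩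
    refine ⟨∑ i, ∑ f : Fin (m-1) → Fin n, |B i f|, ?_⟩
    rintro r ⟨lam, ⟨x, hx0, hx⟩, rfl⟩
    obtain ⟨i0, -, hi0⟩ := Finset.exists_max_image Finset.univ
      (fun i => ‖x i‖) ⟨Classical.arbitrary _, Finset.mem_univ _⟩
    have hx0' : ∃ j, x j ≠ 0 := by
      by_contra h
      push_neg at h
      exact hx0 (funext fun j => h j)
    obtain ⟨j, hj⟩ := hx0'
    have hpos0 : 0 < ‖x i0‖ :=
      lt_of_lt_of_le (by simpa using hj) (hi0 j (Finset.mem_univ j))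
    have key : ‖lam‖ * ‖x i0‖ ^ (m-1)
        ≤ (∑ f : Fin (m-1) → Fin n, |B i0 f|) * ‖x i0‖ ^ (m-1) := by
      have h1 : ‖tmulC B x i0‖
          = ‖lam‖ * ‖x i0‖ ^ (m-1) := by
        rw [hx i0, norm_mul, norm_pow]
      rw [← h1]
      unfold tmulC
      calc ‖∑ f : Fin (m-1) → Fin n, (B i0 f : ℂ) * ∏ t, x (f t)‖
          ≤ ∑ f : Fin (m-1) → Fin n, ‖(B i0 f : ℂ) * ∏ t, x (f t)‖ := by
            exact norm_sum_le _ _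
        _ ≤ ∑ f : Fin (m-1) → Fin n, |B i0 f| * ‖x i0‖ ^ (m-1) := by
            apply Finset.sum_le_sum
            intro f _
            rw [norm_mul, Complex.norm_real, Real.norm_eq_abs, norm_prod]
            apply mul_le_mul_of_nonneg_left _ (abs_nonneg _)
            calc (∏ t, ‖x (f t)‖) ≤ ∏ _t : Fin (m-1), ‖x i0‖ :=
                  Finset.prod_le_prod (fun t _ => norm_nonneg _)
                    (fun t _ => hi0 (f t) (Finset.mem_univ _))
              _ = ‖x i0‖ ^ (m-1) := by simp [Finset.prod_const]
        _ = (∑ f : Fin (m-1) → Fin n, |B i0 f|) * ‖x i0‖ ^ (m-1) := by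
            rw [Finset.sum_mul]
    have h2 : ‖lam‖ ≤ ∑ f : Fin (m-1) → Fin n, |B i0 f| :=
      le_of_mul_le_mul_right key (pow_pos hpos0 _)
    calc ‖lam‖ ≤ ∑ f : Fin (m-1) → Fin n, |B i0 f| := h2
      _ ≤ ∑ i, ∑ f : Fin (m-1) → Fin n, |B i f| := by
          apply Finset.single_le_sum (f := fun i => ∑ f : Fin (m-1) → Fin n, |B i f|)
            (fun i _ => Finset.sum_nonneg fun f _ => abs_nonneg _) (Finset.mem_univ i0)

lemma rho_nonneg (B : Tensor m n) : 0 ≤ rho B := by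
  unfold rho
  by_cases hne : {r : ℝ | ∃ lam : ℂ, IsEigenvalue B lam ∧ r = ‖lam‖}.Nonempty
  · obtain ⟨r, hr⟩ := hne
    have hr0 : 0 ≤ r := by
      obtain ⟨lam, -, rfl⟩ := hr
      exact norm_nonneg _
    exact le_trans hr0 (le_csSup (bddAbove_eigset B) hr)
  · rw [Set.not_nonempty_iff_eq_empty] at hne
    rw [hne, Real.sSup_empty]

lemma no_big_eig {B : Tensor m n} {η : ℝ} (hη : 0 < η) (hρ : rho B < η) :
    ∀ θ : ℝ, η ≤ θ → ∀ y : Fin n → ℝ, (∀ i, 0 ≤ y i) → y ≠ 0 →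
      ¬ (∀ i, tmul B y i = θ * y i ^ (m-1)) := by
  intro θ hθ y hy hy0 heq
  have hxne : (fun i => (y i : ℂ)) ≠ 0 := by
    intro h
    apply hy0
    funext i
    have := congrFun h i
    simpa using this
  have hEig : IsEigenvalue B (θ : ℂ) := by
    refine ⟨fun i => (y i : ℂ), hxne, fun i => ?_⟩
    unfold tmulC
    have : (∑ f : Fin (m-1) → Fin n, (B i f : ℂ) * ∏ t, ((y (f t) : ℝ) : ℂ))
        = ((tmul B y i : ℝ) : ℂ) := by
      unfold tmul
      push_cast
      rfl
    rw [this, heq i]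
    push_cast
    ring
  have hmem : θ ∈ {r : ℝ | ∃ lam : ℂ, IsEigenvalue B lam ∧ r = ‖lam‖} := by
    refine ⟨(θ : ℂ), hEig, ?_⟩
    rw [Complex.norm_real, Real.norm_eq_abs, abs_of_nonneg (le_trans hη.le hθ)]
  have : θ ≤ rho B := le_csSup (bddAbove_eigset B) hmem
  linarith

end Eig
section Iter

variable {m n : ℕ}

open Filter Topology

lemma sup_to_sol (hm : 2 ≤ m) (B : Tensor m n) (hB : TNonneg B) {η : ℝ} (hη : 0 < η)
    {t : ℝ} (ht : 0 ≤ t) {c : Fin n → ℝ} (hc : ∀ i, 0 < c i)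
    {w : Fin n → ℝ} (hw : ∀ i, 0 < w i)
    (hsup : ∀ i, t * tmul B w i + c i ≤ η * w i ^ (m-1)) :
    ∃ x : Fin n → ℝ, (∀ i, 0 < x i) ∧ ∀ i, η * x i ^ (m-1) = t * tmul B x i + c i := by
  have he0 : m - 1 ≠ 0 := by omega
  set e := m - 1 with he
  set step : (Fin n → ℝ) → (Fin n → ℝ) :=
    fun x i => ((t * tmul B x i + c i) / η) ^ ((e : ℝ)⁻¹) with hstep
  have harg_pos : ∀ x : Fin n → ℝ, (∀ i, 0 ≤ x i) → ∀ i, 0 < (t * tmul B x i + c i) / η := by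
    intro x hx i
    have h1 : 0 ≤ t * tmul B x i := mul_nonneg ht (tmul_nonneg hB hx i)
    exact div_pos (by linarith [hc i]) hη
  have hstep_pos : ∀ x : Fin n → ℝ, (∀ i, 0 ≤ x i) → ∀ i, 0 < step x i := by
    intro x hx i
    exact Real.rpow_pos_of_pos (harg_pos x hx i) _
  have hstep_pow : ∀ x : Fin n → ℝ, (∀ i, 0 ≤ x i) → ∀ i,
      (step x i) ^ e = (t * tmul B x i + c i) / η := by
    intro x hx i
    exact Real.rpow_inv_natCast_pow (harg_pos x hx i).le he0
  have hstep_mono : ∀ x y : Fin n → ℝ, (∀ i, 0 ≤ x i) → (∀ i, x i ≤ y i) →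
      ∀ i, step x i ≤ step y i := by
    intro x y hx hxy i
    have h1 : t * tmul B x i ≤ t * tmul B y i :=
      mul_le_mul_of_nonneg_left (tmul_mono hB hx hxy i) ht
    apply Real.rpow_le_rpow (harg_pos x hx i).le _ (by positivity)
    exact (div_le_div_iff_of_pos_right hη).mpr (by linarith)
  -- the supersolution property : step w ≤ w
  have hsw : ∀ i, step w i ≤ w i := by
    intro i
    have h1 : (t * tmul B w i + c i) / η ≤ w i ^ e := by
      rw [div_le_iff₀ hη]
      calc t * tmul B w i + c i ≤ η * w i ^ e := hsup i
        _ = w i ^ e * η := by ring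
    calc step w i ≤ (w i ^ e) ^ ((e:ℝ)⁻¹) :=
          Real.rpow_le_rpow (harg_pos w (fun i => (hw i).le) i).le h1 (by positivity)
      _ = w i := Real.pow_rpow_inv_natCast (hw i).le he0
  set u : ℕ → (Fin n → ℝ) := fun k => step^[k] w with hu
  have hu_succ : ∀ k, u (k+1) = step (u k) := by
    intro k
    simp [hu, Function.iterate_succ_apply']
  -- positivity and monotonicity
  have hmain : ∀ k, (∀ i, 0 < u k i) ∧ (∀ i, u (k+1) i ≤ u k i) := by
    intro k
    induction k with
    | zero =>
      refine ⟨hw, ?_⟩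
      rw [hu_succ 0]
      simpa [hu] using hsw
    | succ k ih =>
      obtain ⟨hpos, hdec⟩ := ih
      constructor
      · rw [hu_succ k]
        exact hstep_pos _ (fun i => (hpos i).le)
      · have hdec' : ∀ i, step (u k) i ≤ u k i := by
          intro i; rw [← hu_succ k]; exact hdec i
        rw [hu_succ (k+1), hu_succ k]
        exact hstep_mono _ _ (fun i => (hstep_pos _ (fun j => (hpos j).le) i).le) hdec'
  have hupos : ∀ k i, 0 < u k i := fun k => (hmain k).1
  have hudec : ∀ k i, u (k+1) i ≤ u k i := fun k => (hmain k).2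
  -- uniform positive lower bound
  set L : Fin n → ℝ := fun i => min (w i) ((c i / η) ^ ((e:ℝ)⁻¹)) with hL
  have hLpos : ∀ i, 0 < L i := by
    intro i
    exact lt_min (hw i) (Real.rpow_pos_of_pos (div_pos (hc i) hη) _)
  have hulb : ∀ k i, L i ≤ u k i := by
    intro k
    induction k with
    | zero => intro i; exact min_le_left _ _
    | succ k ih =>
      intro i
      rw [hu_succ k]
      refine le_trans (min_le_right _ _) ?_
      apply Real.rpow_le_rpow (div_pos (hc i) hη).le _ (by positivity)
      apply (div_le_div_iff_of_pos_right hη).mpr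
      have : 0 ≤ t * tmul B (u k) i := mul_nonneg ht (tmul_nonneg hB (fun j => (hupos k j).le) i)
      linarith
  -- limit
  have hanti : ∀ i, Antitone (fun k => u k i) := by
    intro i
    apply antitone_nat_of_succ_le
    intro k
    exact hudec k i
  set x : Fin n → ℝ := fun i => ⨅ k, u k i with hx
  have hconv : ∀ i, Tendsto (fun k => u k i) atTop (𝓝 (x i)) := by
    intro i
    apply tendsto_atTop_ciInf (hanti i)
    exact ⟨L i, fun r ⟨k, hk⟩ => hk ▸ hulb k i⟩
  have hxlb : ∀ i, L i ≤ x i := by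
    intro i
    exact le_ciInf (fun k => hulb k i)
  have hxpos : ∀ i, 0 < x i := fun i => lt_of_lt_of_le (hLpos i) (hxlb i)
  have hconv' : Tendsto u atTop (𝓝 x) := by
    rw [tendsto_pi_nhds]
    exact fun i => hconv i
  -- fixed point
  have hfix : ∀ i, step x i = x i := by
    intro i
    have h1 : Tendsto (fun k => u (k+1) i) atTop (𝓝 (x i)) :=
      (hconv i).comp (tendsto_add_atTop_nat 1)
    have h2 : Tendsto (fun k => step (u k) i) atTop (𝓝 (step x i)) := by
      have hcont : ContinuousAt (fun z : Fin n → ℝ => step z i) x := by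
        apply ContinuousAt.rpow_const
        · exact (((continuous_const.mul (continuous_tmul B i)).add
            continuous_const).div_const η).continuousAt
        · left
          exact (harg_pos x (fun j => (hxpos j).le) i).ne'
      exact hcont.tendsto.comp hconv'
    have h3 : (fun k => u (k+1) i) = (fun k => step (u k) i) := by
      funext k
      rw [hu_succ k]
    rw [h3] at h1
    exact tendsto_nhds_unique h2 h1
  refine ⟨x, hxpos, fun i => ?_⟩
  have h4 : x i ^ e = (t * tmul B x i + c i) / η := by
    rw [← hfix i]
    exact hstep_pow x (fun j => (hxpos j).le) i
  rw [h4]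
  field_simp

end Iter
section Exists

variable {m n : ℕ}

open Filter Topology

lemma exists_pos_sol (hm : 2 ≤ m) (hn : 1 ≤ n) (B : Tensor m n) (hB : TNonneg B)
    {η : ℝ} (hη : 0 < η)
    (heig : ∀ θ : ℝ, η ≤ θ → ∀ y : Fin n → ℝ, (∀ i, 0 ≤ y i) → y ≠ 0 →
      ¬ (∀ i, tmul B y i = θ * y i ^ (m-1)))
    (c : Fin n → ℝ) (hc : ∀ i, 0 < c i) :
    ∃ x : Fin n → ℝ, (∀ i, 0 < x i) ∧ ∀ i, η * x i ^ (m-1) = tmul B x i + c i := by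
  haveI : Nonempty (Fin n) := ⟨⟨0, hn⟩⟩
  have he0 : m - 1 ≠ 0 := by omega
  set e := m - 1 with he
  set Sol : ℝ → Prop :=
    fun t => ∃ x : Fin n → ℝ, (∀ i, 0 < x i) ∧ ∀ i, η * x i ^ e = t * tmul B x i + c i
    with hSol
  set S : Set ℝ := {t | 0 ≤ t ∧ t ≤ 1 ∧ Sol t} with hS
  -- 0 ∈ S
  have h0S : (0:ℝ) ∈ S := by
    refine ⟨le_refl 0, zero_le_one, ?_⟩
    set w : Fin n → ℝ := fun i => (c i / η) ^ ((e:ℝ)⁻¹) with hw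
    have hwpos : ∀ i, 0 < w i := fun i => Real.rpow_pos_of_pos (div_pos (hc i) hη) _
    have := sup_to_sol hm B hB hη (le_refl 0) hc hwpos (fun i => ?_)
    · exact this
    · have hwe : w i ^ e = c i / η := Real.rpow_inv_natCast_pow (div_pos (hc i) hη).le he0
      rw [hwe, zero_mul, zero_add, mul_div_cancel₀ _ hη.ne']
  -- stepping up
  have hstep_up : ∀ t : ℝ, 0 ≤ t → Sol t →
      ∃ δ > 0, ∀ t' : ℝ, t ≤ t' → t' ≤ t + δ → Sol t' := by
    rintro t ht ⟨x, hx, hxe⟩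
    set δ : ℝ := Finset.univ.inf' Finset.univ_nonempty
      (fun i => c i / (2 * (tmul B x i + 1))) with hδ
    have hBx : ∀ i, 0 ≤ tmul B x i := tmul_nonneg hB (fun i => (hx i).le)
    have hδpos : 0 < δ := by
      rw [hδ, Finset.lt_inf'_iff]
      intro i _
      have := hBx i
      exact div_pos (hc i) (by linarith)
    refine ⟨δ, hδpos, fun t' ht1 ht2 => ?_⟩
    set a : ℝ := (2:ℝ) ^ ((e:ℝ)⁻¹) with ha
    have hapos : 0 < a := Real.rpow_pos_of_pos (by norm_num) _
    have hae : a ^ e = 2 := Real.rpow_inv_natCast_pow (by norm_num) he0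
    set w : Fin n → ℝ := a • x with hw
    have hwpos : ∀ i, 0 < w i := fun i => by
      simp only [hw, Pi.smul_apply, smul_eq_mul]
      exact mul_pos hapos (hx i)
    apply sup_to_sol hm B hB hη (le_trans ht ht1) hc hwpos
    intro i
    have h1 : tmul B w i = 2 * tmul B x i := by
      rw [hw, tmul_smul_vec, ← he, hae]
    have h2 : w i ^ e = 2 * x i ^ e := by
      simp only [hw, Pi.smul_apply, smul_eq_mul, mul_pow, ← he, hae]
    have h3 : δ * (tmul B x i + 1) ≤ c i / 2 := by
      have h4 : δ ≤ c i / (2 * (tmul B x i + 1)) := by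
        rw [hδ]
        exact Finset.inf'_le _ (Finset.mem_univ i)
      have h5 : 0 < tmul B x i + 1 := by have := hBx i; linarith
      calc δ * (tmul B x i + 1) ≤ c i / (2 * (tmul B x i + 1)) * (tmul B x i + 1) := by
            exact mul_le_mul_of_nonneg_right h4 h5.le
        _ = c i / 2 := by field_simp
    have h6 : (t' - t) * tmul B x i ≤ c i / 2 := by
      have : (t' - t) * tmul B x i ≤ δ * (tmul B x i + 1) := by
        have := hBx i
        nlinarith
      linarith
    have h7 : η * x i ^ e = t * tmul B x i + c i := hxe i
    rw [h1, h2]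
    nlinarith [hBx i]
  -- closedness
  have hclosed : ∀ (tk : ℕ → ℝ) (T : ℝ), (∀ j, tk j ∈ S) → 0 ≤ T → T ≤ 1 →
      Tendsto tk atTop (𝓝 T) → Sol T := by
    intro tk T htk hT0 hT1 htkT
    have hsol : ∀ j, Sol (tk j) := fun j => (htk j).2.2
    choose xk hxkpos hxke using hsol
    have htk0 : ∀ j, 0 ≤ tk j := fun j => (htk j).1
    have htk1 : ∀ j, tk j ≤ 1 := fun j => (htk j).2.1
    set L : Fin n → ℝ := fun i => (c i / η) ^ ((e:ℝ)⁻¹) with hL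
    have hLpos : ∀ i, 0 < L i := fun i => Real.rpow_pos_of_pos (div_pos (hc i) hη) _
    have hlb : ∀ j i, L i ≤ xk j i := by
      intro j i
      have h1 : c i / η ≤ xk j i ^ e := by
        rw [div_le_iff₀ hη]
        have h2 : 0 ≤ tk j * tmul B (xk j) i :=
          mul_nonneg (htk0 j) (tmul_nonneg hB (fun l => (hxkpos j l).le) i)
        have := hxke j i
        nlinarith
      calc L i ≤ (xk j i ^ e) ^ ((e:ℝ)⁻¹) :=
            Real.rpow_le_rpow (div_pos (hc i) hη).le h1 (by positivity)
        _ = xk j i := Real.pow_rpow_inv_natCast (hxkpos j i).le he0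
    by_cases hbdd : ∃ R : ℝ, ∀ j i, xk j i ≤ R
    · -- bounded case : compactness
      obtain ⟨R, hR⟩ := hbdd
      have hR' : ∀ i, L i ≤ R := fun i => le_trans (hlb 0 i) (hR 0 i)
      have hmem : ∀ j, xk j ∈ Set.Icc L (fun _ => R) := by
        intro j
        constructor
        · intro i; exact hlb j i
        · intro i; exact hR j i
      obtain ⟨x, hxmem, φ, hφ, hxconv⟩ := (isCompact_Icc (a := L)
        (b := fun _ => R)).tendsto_subseq hmem
      have hxpos : ∀ i, 0 < x i := fun i => lt_of_lt_of_le (hLpos i) (hxmem.1 i)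
      refine ⟨x, hxpos, fun i => ?_⟩
      have hconv_i : Tendsto (fun j => xk (φ j) i) atTop (𝓝 (x i)) :=
        ((continuous_apply i).continuousAt.tendsto.comp hxconv)
      have hlhs : Tendsto (fun j => η * xk (φ j) i ^ e) atTop (𝓝 (η * x i ^ e)) :=
        (hconv_i.pow e).const_mul η
      have hrhs : Tendsto (fun j => tk (φ j) * tmul B (xk (φ j)) i + c i)
          atTop (𝓝 (T * tmul B x i + c i)) := by
        apply Tendsto.add _ tendsto_const_nhds
        apply Tendsto.mul
        · exact htkT.comp hφ.tendsto_atTop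
        · exact ((continuous_tmul B i).continuousAt.tendsto.comp hxconv)
      have heq : (fun j => η * xk (φ j) i ^ e)
          = (fun j => tk (φ j) * tmul B (xk (φ j)) i + c i) := by
        funext j
        exact hxke (φ j) i
      rw [heq] at hlhs
      exact tendsto_nhds_unique hlhs hrhs
    · -- unbounded case : contradiction with heig
      exfalso
      push_neg at hbdd
      set M : ℕ → ℝ := fun j => ‖xk j‖ with hM
      have hxkM : ∀ j i, xk j i ≤ M j := by
        intro j i
        calc xk j i ≤ |xk j i| := le_abs_self _
          _ = ‖xk j i‖ := rfl
          _ ≤ M j := norm_le_pi_norm (xk j) i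
      have hfreq : ∀ N : ℕ, ∃ᶠ j in atTop, (N:ℝ) < M j := by
        intro N
        rw [frequently_atTop]
        intro a
        set C : ℝ := max (N:ℝ) ((Finset.range (a+1)).sup' Finset.nonempty_range_add_one
          (fun j => M j)) with hC
        obtain ⟨j, i, hji⟩ := hbdd (C + 1)
        refine ⟨j, ?_, ?_⟩
        · by_contra hja
          push_neg at hja
          have hmem : j ∈ Finset.range (a+1) := Finset.mem_range.mpr (by omega)
          have h9 : M j ≤ (Finset.range (a+1)).sup' Finset.nonempty_range_add_one
              (fun j => M j) :=
            Finset.le_sup' (fun j => M j) hmem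
          have : M j ≤ C := le_trans h9 (le_max_right _ _)
          have := hxkM j i
          linarith
        · have := hxkM j i
          have hNC : (N:ℝ) ≤ C := le_max_left _ _
          linarith
      obtain ⟨φ, hφ, hφM⟩ := Filter.extraction_forall_of_frequently hfreq
      have hMφpos : ∀ j, 0 < M (φ j) := by
        intro j
        have := hφM j
        have : (0:ℝ) ≤ (j:ℝ) := Nat.cast_nonneg j
        linarith [hφM j]
      have hMφtop : Tendsto (fun j => M (φ j)) atTop atTop := by
        apply tendsto_atTop_mono (fun j => (hφM j).le)
        exact tendsto_natCast_atTop_atTop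
      set yk : ℕ → (Fin n → ℝ) := fun j => (M (φ j))⁻¹ • xk (φ j) with hyk
      have hykpos : ∀ j i, 0 < yk j i := by
        intro j i
        simp only [hyk, Pi.smul_apply, smul_eq_mul]
        exact mul_pos (inv_pos.mpr (hMφpos j)) (hxkpos (φ j) i)
      have hykmem : ∀ j, yk j ∈ Set.Icc (0 : Fin n → ℝ) 1 := by
        intro j
        constructor
        · intro i; exact (hykpos j i).le
        · intro i
          simp only [hyk, Pi.smul_apply, smul_eq_mul, Pi.one_apply]
          rw [inv_mul_le_iff₀ (hMφpos j), mul_one]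
          exact hxkM (φ j) i
      have hyknorm : ∀ j, ‖yk j‖ = 1 := by
        intro j
        simp only [hyk, norm_smul, norm_inv, Real.norm_eq_abs,
          abs_of_pos (hMφpos j)]
        exact inv_mul_cancel₀ (hMφpos j).ne'
      obtain ⟨y, hymem, ψ, hψ, hyconv⟩ := (isCompact_Icc (a := (0 : Fin n → ℝ))
        (b := 1)).tendsto_subseq hykmem
      have hynorm : ‖y‖ = 1 := by
        have h1 : Tendsto (fun j => ‖yk (ψ j)‖) atTop (𝓝 ‖y‖) :=
          (continuous_norm.continuousAt.tendsto.comp hyconv)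
        have h2 : (fun j => ‖yk (ψ j)‖) = fun _ => (1:ℝ) := funext fun j => hyknorm (ψ j)
        rw [h2] at h1
        exact tendsto_nhds_unique h1 tendsto_const_nhds
      have hyne : y ≠ 0 := fun h => by simp [h] at hynorm
      -- the rescaled equation
      have hykeq : ∀ j i, η * yk j i ^ e
          = tk (φ j) * tmul B (yk j) i + c i * ((M (φ j))⁻¹) ^ e := by
        intro j i
        have h1 : tmul B (yk j) i = ((M (φ j))⁻¹) ^ e * tmul B (xk (φ j)) i := by
          rw [hyk]
          exact tmul_smul_vec B _ _ i
        have h2 : yk j i ^ e = ((M (φ j))⁻¹) ^ e * xk (φ j) i ^ e := by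
          simp only [hyk, Pi.smul_apply, smul_eq_mul, mul_pow]
        have h3 := hxke (φ j) i
        rw [h1, h2]
        linear_combination ((M (φ j))⁻¹ ^ e) * h3
      -- pass to the limit
      have hMψtop : Tendsto (fun j => M (φ (ψ j))) atTop atTop :=
        hMφtop.comp hψ.tendsto_atTop
      have hinv0 : Tendsto (fun j => ((M (φ (ψ j)))⁻¹) ^ e) atTop (𝓝 0) := by
      
        have h1 : Tendsto (fun j => (M (φ (ψ j)))⁻¹) atTop (𝓝 0) :=
          hMψtop.inv_tendsto_atTop
        have := h1.pow e
        rwa [zero_pow he0] at this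
      have hTlim : Tendsto (fun j => tk (φ (ψ j))) atTop (𝓝 T) :=
        htkT.comp ((hφ.comp hψ).tendsto_atTop)
      have heqT : ∀ i, η * y i ^ e = T * tmul B y i := by
        intro i
        have hyconv_i : Tendsto (fun j => yk (ψ j) i) atTop (𝓝 (y i)) :=
          ((continuous_apply i).continuousAt.tendsto.comp hyconv)
        have hlhs : Tendsto (fun j => η * yk (ψ j) i ^ e) atTop (𝓝 (η * y i ^ e)) :=
          (hyconv_i.pow e).const_mul η
        have hrhs : Tendsto
            (fun j => tk (φ (ψ j)) * tmul B (yk (ψ j)) i + c i * ((M (φ (ψ j)))⁻¹) ^ e)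
            atTop (𝓝 (T * tmul B y i + c i * 0)) := by
          apply Tendsto.add
          · exact hTlim.mul ((continuous_tmul B i).continuousAt.tendsto.comp hyconv)
          · exact hinv0.const_mul (c i)
        have heq2 : (fun j => η * yk (ψ j) i ^ e)
            = (fun j => tk (φ (ψ j)) * tmul B (yk (ψ j)) i + c i * ((M (φ (ψ j)))⁻¹) ^ e) :=
          funext fun j => hykeq (ψ j) i
        rw [heq2] at hlhs
        have := tendsto_nhds_unique hlhs hrhs
        rw [this, mul_zero, add_zero]
      -- T cannot be zero
      have hTne : T ≠ 0 := by
        intro hT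
        apply hyne
        funext i
        have h1 := heqT i
        rw [hT, zero_mul] at h1
        have h2 : y i ^ e = 0 := (mul_eq_zero.mp h1).resolve_left hη.ne'
        have h3 : y i = 0 := pow_eq_zero_iff he0 |>.mp h2
        exact h3
      have hTpos : 0 < T := lt_of_le_of_ne hT0 (Ne.symm hTne)
      set θ : ℝ := η / T with hθ
      have hθge : η ≤ θ := by
        rw [hθ, le_div_iff₀ hTpos]
        nlinarith
      apply heig θ hθge y (fun i => hymem.1 i) hyne
      intro i
      have h1 := heqT i
      rw [hθ]
      field_simp
      nlinarith [h1]
  -- now run the sup argument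
  have hSne : S.Nonempty := ⟨0, h0S⟩
  have hSbdd : BddAbove S := ⟨1, fun t ht => ht.2.1⟩
  set T : ℝ := sSup S with hT
  have hT0 : 0 ≤ T := le_csSup hSbdd h0S
  have hT1 : T ≤ 1 := csSup_le hSne (fun t ht => ht.2.1)
  -- a sequence in S tending to T
  have hseq : ∀ j : ℕ, ∃ t ∈ S, T - 1/(j+1) < t := by
    intro j
    apply exists_lt_of_lt_csSup hSne
    have : (0:ℝ) < 1/(j+1) := by positivity
    linarith
  choose tk htkS htklt using hseq
  have htkle : ∀ j, tk j ≤ T := fun j => le_csSup hSbdd (htkS j)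
  have htkT : Tendsto tk atTop (𝓝 T) := by
    have h1 : Tendsto (fun j : ℕ => T - 1/(j+1)) atTop (𝓝 (T - 0)) :=
      tendsto_const_nhds.sub tendsto_one_div_add_atTop_nhds_zero_nat
    rw [sub_zero] at h1
    exact tendsto_of_tendsto_of_tendsto_of_le_of_le h1 tendsto_const_nhds
      (fun j => (htklt j).le) htkle
  have hSolT : Sol T := hclosed tk T htkS hT0 hT1 htkT
  have hTS : T ∈ S := ⟨hT0, hT1, hSolT⟩
  have hT1' : T = 1 := by
    by_contra hne
    have hTlt : T < 1 := lt_of_le_of_ne hT1 hne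
    obtain ⟨δ, hδpos, hδ⟩ := hstep_up T hT0 hSolT
    set t' : ℝ := min 1 (T + δ) with ht'
    have ht'S : t' ∈ S := by
      refine ⟨?_, min_le_left _ _, ?_⟩
      · have : T ≤ t' := le_min hTlt.le (by linarith)
        linarith
      · exact hδ t' (le_min hTlt.le (by linarith)) (min_le_right _ _)
    have h1 : t' ≤ T := le_csSup hSbdd ht'S
    have h2 : T < t' := lt_min hTlt (by linarith)
    linarith
  rw [hT1'] at hSolT
  obtain ⟨x, hx, hxe⟩ := hSolT
  exact ⟨x, hx, fun i => by rw [hxe i, one_mul]⟩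

end Exists
section Uniq

variable {m n : ℕ}

lemma tmul_split (hm : 2 ≤ m) (C : Tensor m n) (z : Fin n → ℝ) (i : Fin n) :
    tmul C z i = C i (fun _ => i) * z i ^ (m-1)
      - tmul (fun i f => if f = (fun _ => i) then 0 else -C i f) z i := by
  unfold tmul
  have hsplit : ∀ f : Fin (m-1) → Fin n,
      C i f * ∏ t, z (f t)
        = (if f = (fun _ => i) then C i f * ∏ t, z (f t) else 0)
          - ((if f = (fun _ => i) then (0:ℝ) else -C i f) * ∏ t, z (f t)) := by
    intro f
    by_cases hf : f = (fun _ => i) <;> simp [hf]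
  rw [Finset.sum_congr rfl (fun f _ => hsplit f), Finset.sum_sub_distrib]
  congr 1
  rw [Finset.sum_ite_eq' Finset.univ (fun _ => i)
    (fun f => C i f * ∏ t, z (f t))]
  simp [Finset.prod_const]

lemma z_le (hm : 2 ≤ m) (hn : 1 ≤ n) (C : Tensor m n)
    (hZ : ∀ i (f : Fin (m-1) → Fin n), f ≠ (fun _ => i) → C i f ≤ 0)
    {c x y : Fin n → ℝ} (hc : ∀ i, 0 < c i) (hx : ∀ i, 0 < x i) (hy : ∀ i, 0 < y i)
    (ex : ∀ i, tmul C x i = c i) (ey : ∀ i, tmul C y i = c i) :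
    ∀ i, x i ≤ y i := by
  haveI : Nonempty (Fin n) := ⟨⟨0, hn⟩⟩
  have he0 : m - 1 ≠ 0 := by omega
  set N : Tensor m n := fun i f => if f = (fun _ => i) then 0 else -C i f with hN
  have hNnn : TNonneg N := by
    intro i f
    rw [hN]
    by_cases hf : f = (fun _ => i)
    · simp [hf]
    · simp [hf]
      linarith [hZ i f hf]
  set D : Fin n → ℝ := fun i => C i (fun _ => i) with hD
  have hex : ∀ i, D i * x i ^ (m-1) - tmul N x i = c i := by
    intro i; rw [← ex i, tmul_split hm C x i]
  have hey : ∀ i, D i * y i ^ (m-1) - tmul N y i = c i := by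
    intro i; rw [← ey i, tmul_split hm C y i]
  have hDpos : ∀ i, 0 < D i := by
    intro i
    have h1 : 0 ≤ tmul N x i := tmul_nonneg hNnn (fun j => (hx j).le) i
    have h2 : D i * x i ^ (m-1) = c i + tmul N x i := by linarith [hex i]
    have h3 : 0 < D i * x i ^ (m-1) := by
      rw [h2]; linarith [hc i]
    by_contra hD0
    push_neg at hD0
    nlinarith [pow_pos (hx i) (m-1)]
  set r : ℝ := Finset.univ.sup' Finset.univ_nonempty (fun i => x i / y i) with hr
  obtain ⟨i0, -, hi0⟩ := Finset.exists_mem_eq_sup' Finset.univ_nonempty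
    (fun i => x i / y i)
  have hrpos : 0 < r := by
    rw [hr, hi0]
    exact div_pos (hx i0) (hy i0)
  have hle : ∀ j, x j ≤ r * y j := by
    intro j
    have h1 : x j / y j ≤ r := Finset.le_sup' (fun i => x i / y i) (Finset.mem_univ j)
    rw [div_le_iff₀ (hy j)] at h1
    linarith
  have hxi0 : x i0 = r * y i0 := by
    have h : r = x i0 / y i0 := hi0
    rw [h]
    exact (div_mul_cancel₀ _ (hy i0).ne').symm
  have hNle : tmul N x i0 ≤ r ^ (m-1) * tmul N y i0 := by
    have h1 : tmul N x i0 ≤ tmul N (r • y) i0 :=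
      tmul_mono hNnn (fun j => (hx j).le) (fun j => by simpa using hle j) i0
    rw [tmul_smul_vec] at h1
    exact h1
  have hkey : r ^ (m-1) * c i0 ≤ c i0 := by
    have h1 : c i0 = D i0 * x i0 ^ (m-1) - tmul N x i0 := (hex i0).symm
    have h2 : D i0 * x i0 ^ (m-1) = r ^ (m-1) * (D i0 * y i0 ^ (m-1)) := by
      rw [hxi0, mul_pow]; ring
    have h3 : c i0 ≥ r ^ (m-1) * (D i0 * y i0 ^ (m-1)) - r ^ (m-1) * tmul N y i0 := by
      rw [h1, h2]; linarith [hNle]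
    have h4 : r ^ (m-1) * (D i0 * y i0 ^ (m-1)) - r ^ (m-1) * tmul N y i0
        = r ^ (m-1) * c i0 := by
      rw [← hey i0]; ring
    linarith
  have hr1 : r ≤ 1 := by
    have h5 : r ^ (m-1) ≤ 1 := by
      have := hc i0
      nlinarith
    exact (pow_le_one_iff_of_nonneg hrpos.le he0).mp h5
  intro i
  calc x i ≤ r * y i := hle i
    _ ≤ 1 * y i := mul_le_mul_of_nonneg_right hr1 (hy i).le
    _ = y i := one_mul _

lemma z_uniq (hm : 2 ≤ m) (hn : 1 ≤ n) (C : Tensor m n)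
    (hZ : ∀ i (f : Fin (m-1) → Fin n), f ≠ (fun _ => i) → C i f ≤ 0)
    {c x y : Fin n → ℝ} (hc : ∀ i, 0 < c i) (hx : ∀ i, 0 < x i) (hy : ∀ i, 0 < y i)
    (ex : ∀ i, tmul C x i = c i) (ey : ∀ i, tmul C y i = c i) : x = y := by
  funext i
  exact le_antisymm (z_le hm hn C hZ hc hx hy ex ey i) (z_le hm hn C hZ hc hy hx ey ex i)

end Uniq
section Precond

variable {m n : ℕ}

lemma offdiag_nonpos {A B : Tensor m n} {η : ℝ}
    (hB : TNonneg B) (hAB : A = η • idT m n - B) :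
    ∀ (p : Fin n) (f : Fin (m-1) → Fin n), f ≠ (fun _ => p) → A p f ≤ 0 := by
  intro p f hf
  have hid : idT m n p f = 0 := by
    unfold idT
    rw [if_neg]
    intro h
    exact hf (funext h)
  rw [hAB]
  simp only [Pi.sub_apply, Pi.smul_apply, smul_eq_mul, hid, mul_zero, zero_sub]
  linarith [hB p f]

lemma Ssum (A : Tensor m n) (α : Fin n → ℝ) (s : ℕ) (g : Fin n → ℝ) (j : Fin n) :
    ∑ j₂, Smat A α s j j₂ * g j₂
      = if h : (j:ℕ) + s < n then
          -(α j * maj A j ⟨(j:ℕ)+s, h⟩) * g ⟨(j:ℕ)+s, h⟩ else 0 := by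
  by_cases h : (j:ℕ) + s < n
  · rw [dif_pos h]
    rw [Finset.sum_eq_single (⟨(j:ℕ)+s, h⟩ : Fin n)]
    · unfold Smat
      rw [if_pos rfl]
    · intro j₂ _ hne
      unfold Smat
      rw [if_neg, zero_mul]
      intro hval
      exact hne (Fin.ext hval)
    · intro habs
      exact absurd (Finset.mem_univ _) habs
  · rw [dif_neg h]
    apply Finset.sum_eq_zero
    intro j₂ _
    unfold Smat
    rw [if_neg, zero_mul]
    have := j₂.isLt
    omega

lemma Ksum (A : Tensor m n) (β : Fin n → ℝ) (k : ℕ) (g : Fin n → ℝ) (j : Fin n) :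
    ∑ j₂, Kmat A β k j j₂ * g j₂
      = if h : k ≤ (j:ℕ) then
          -(β j * maj A j ⟨(j:ℕ)-k, lt_of_le_of_lt (Nat.sub_le _ _) j.isLt⟩)
            * g ⟨(j:ℕ)-k, lt_of_le_of_lt (Nat.sub_le _ _) j.isLt⟩ else 0 := by
  by_cases h : k ≤ (j:ℕ)
  · rw [dif_pos h]
    rw [Finset.sum_eq_single (⟨(j:ℕ)-k, lt_of_le_of_lt (Nat.sub_le _ _) j.isLt⟩ : Fin n)]
    · unfold Kmat
      have hcond : (j:ℕ)
          = ((⟨(j:ℕ)-k, lt_of_le_of_lt (Nat.sub_le _ _) j.isLt⟩ : Fin n) : ℕ) + k := by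
        show (j:ℕ) = (j:ℕ) - k + k
        omega
      rw [if_pos hcond]
    · intro j₂ _ hne
      unfold Kmat
      rw [if_neg, zero_mul]
      intro hval
      apply hne
      apply Fin.ext
      show (j₂:ℕ) = (j:ℕ) - k
      omega
    · intro habs
      exact absurd (Finset.mem_univ _) habs
  · rw [dif_neg h]
    apply Finset.sum_eq_zero
    intro j₂ _
    unfold Kmat
    rw [if_neg, zero_mul]
    have := j₂.isLt
    omega

lemma Psum (A : Tensor m n) (α β : Fin n → ℝ) (s k : ℕ) (g : Fin n → ℝ) (j : Fin n) :
    ∑ j₂, Pmat A α β s k j j₂ * g j₂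
      = g j + (∑ j₂, Smat A α s j j₂ * g j₂) + (∑ j₂, Kmat A β k j j₂ * g j₂) := by
  unfold Pmat
  have : ∀ j₂, (1 + Smat A α s + Kmat A β k) j j₂ * g j₂
      = (if j = j₂ then g j₂ else 0) + Smat A α s j j₂ * g j₂ + Kmat A β k j j₂ * g j₂ := by
    intro j₂
    simp only [Matrix.add_apply, Matrix.one_apply]
    by_cases h : j = j₂ <;> simp [h] <;> ring
  rw [Finset.sum_congr rfl (fun j₂ _ => this j₂)]
  rw [Finset.sum_add_distrib, Finset.sum_add_distrib, Finset.sum_ite_eq Finset.univ j g]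
  simp

end Precond
section PrecondSign

variable {m n : ℕ}

lemma const_ne (hm : 2 ≤ m) {p q : Fin n} (hpq : p ≠ q) :
    (fun _ : Fin (m-1) => p) ≠ (fun _ => q) := by
  intro h
  exact hpq (congrFun h ⟨0, by omega⟩)

lemma maj_offdiag_nonpos (hm : 2 ≤ m) {A B : Tensor m n} {η : ℝ}
    (hB : TNonneg B) (hAB : A = η • idT m n - B) {p q : Fin n} (hqp : q ≠ p) :
    maj A p q ≤ 0 :=
  offdiag_nonpos hB hAB p _ (const_ne hm hqp)

lemma Scoef_nonneg (hm : 2 ≤ m) {A B : Tensor m n} {η : ℝ}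
    (hB : TNonneg B) (hAB : A = η • idT m n - B) {s : ℕ} (hs1 : 1 ≤ s)
    {α : Fin n → ℝ} (hα : ∀ i : Fin n, (i : ℕ) + s < n → α i ∈ Set.Icc (0:ℝ) 1)
    (j : Fin n) (h : (j:ℕ) + s < n) :
    0 ≤ -(α j * maj A j ⟨(j:ℕ)+s, h⟩) := by
  have h1 := (hα j h).1
  have h2 : maj A j ⟨(j:ℕ)+s, h⟩ ≤ 0 := by
    apply maj_offdiag_nonpos hm hB hAB
    intro hq
    have := congrArg Fin.val hq
    simp at this
    omega
  nlinarith

lemma Kcoef_nonneg (hm : 2 ≤ m) {A B : Tensor m n} {η : ℝ}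
    (hB : TNonneg B) (hAB : A = η • idT m n - B) {k : ℕ} (hk1 : 1 ≤ k)
    {β : Fin n → ℝ} (hβ : ∀ i : Fin n, k ≤ (i : ℕ) → β i ∈ Set.Icc (0:ℝ) 1)
    (j : Fin n) (h : k ≤ (j:ℕ)) :
    0 ≤ -(β j * maj A j ⟨(j:ℕ)-k, lt_of_le_of_lt (Nat.sub_le _ _) j.isLt⟩) := by
  have h1 := (hβ j h).1
  have h2 : maj A j ⟨(j:ℕ)-k, lt_of_le_of_lt (Nat.sub_le _ _) j.isLt⟩ ≤ 0 := by
    apply maj_offdiag_nonpos hm hB hAB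
    intro hq
    have := congrArg Fin.val hq
    simp at this
    omega
  nlinarith

lemma precond_offdiag_nonpos (hm : 2 ≤ m) {A B : Tensor m n} {η : ℝ}
    (hB : TNonneg B) (hAB : A = η • idT m n - B) (hdiag : UnitDiag A)
    {s k : ℕ} (hs1 : 1 ≤ s) (hk1 : 1 ≤ k)
    {α β : Fin n → ℝ}
    (hα : ∀ i : Fin n, (i : ℕ) + s < n → α i ∈ Set.Icc (0:ℝ) 1)
    (hβ : ∀ i : Fin n, k ≤ (i : ℕ) → β i ∈ Set.Icc (0:ℝ) 1) :
    ∀ (j : Fin n) (f : Fin (m-1) → Fin n), f ≠ (fun _ => j) →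
      precond A α β s k j f ≤ 0 := by
  have hoff := offdiag_nonpos hB hAB
  intro j f hf
  have hrepr : precond A α β s k j f = ∑ j₂, Pmat A α β s k j j₂ * A j₂ f := rfl
  rw [hrepr, Psum, Ssum, Ksum]
  have hAjf : A j f ≤ 0 := hoff j f hf
  -- bound the S-term plus K-term by -A j f
  have hkey :
      (if h : (j:ℕ) + s < n then
        -(α j * maj A j ⟨(j:ℕ)+s, h⟩) * A ⟨(j:ℕ)+s, h⟩ f else 0)
      + (if h : k ≤ (j:ℕ) then
        -(β j * maj A j ⟨(j:ℕ)-k, lt_of_le_of_lt (Nat.sub_le _ _) j.isLt⟩)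
          * A ⟨(j:ℕ)-k, lt_of_le_of_lt (Nat.sub_le _ _) j.isLt⟩ f else 0)
      ≤ -A j f := by
    have hTS : ∀ (TS TK : ℝ), TS ≤ -A j f → TK ≤ 0 → TS + TK ≤ -A j f := by
      intro TS TK h1 h2; linarith
    have hTK : ∀ (TS TK : ℝ), TS ≤ 0 → TK ≤ -A j f → TS + TK ≤ -A j f := by
      intro TS TK h1 h2; linarith
    by_cases hfu : ∃ h : (j:ℕ) + s < n, f = (fun _ => (⟨(j:ℕ)+s, h⟩ : Fin n))
    · obtain ⟨h, hfe⟩ := hfu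
      apply hTS
      · rw [dif_pos h]
        have hAuf : A ⟨(j:ℕ)+s, h⟩ f = 1 := by rw [hfe]; exact hdiag _
        have hAjf' : A j f = maj A j ⟨(j:ℕ)+s, h⟩ := by rw [hfe]; rfl
        rw [hAuf, mul_one, hAjf']
        have hα0 := (hα j h).1
        have hα1 := (hα j h).2
        have hmaj0 : maj A j ⟨(j:ℕ)+s, h⟩ ≤ 0 := by
          apply maj_offdiag_nonpos hm hB hAB
          intro hq
          have := congrArg Fin.val hq
          simp at this
          omega
        nlinarith
      · by_cases h2 : k ≤ (j:ℕ)
        · rw [dif_pos h2]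
          have hAvf : A ⟨(j:ℕ)-k, lt_of_le_of_lt (Nat.sub_le _ _) j.isLt⟩ f ≤ 0 := by
            apply hoff
            rw [hfe]
            apply const_ne hm
            intro hq
            have := congrArg Fin.val hq
            simp at this
            omega
          have hκ := Kcoef_nonneg hm hB hAB hk1 hβ j h2
          nlinarith
        · rw [dif_neg h2]
    · apply hTK
      · by_cases h1 : (j:ℕ) + s < n
        · rw [dif_pos h1]
          have hAuf : A ⟨(j:ℕ)+s, h1⟩ f ≤ 0 := by
            apply hoff
            intro hfe
            exact hfu ⟨h1, hfe⟩
          have hσ := Scoef_nonneg hm hB hAB hs1 hα j h1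
          nlinarith
        · rw [dif_neg h1]
      · by_cases h2 : k ≤ (j:ℕ)
        · rw [dif_pos h2]
          by_cases hfv : f = (fun _ => (⟨(j:ℕ)-k, lt_of_le_of_lt (Nat.sub_le _ _) j.isLt⟩ : Fin n))
          · have hAvf : A ⟨(j:ℕ)-k, lt_of_le_of_lt (Nat.sub_le _ _) j.isLt⟩ f = 1 := by
              rw [hfv]; exact hdiag _
            have hAjf' : A j f
                = maj A j ⟨(j:ℕ)-k, lt_of_le_of_lt (Nat.sub_le _ _) j.isLt⟩ := by
              rw [hfv]; rfl
            rw [hAvf, mul_one, hAjf']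
            have hβ0 := (hβ j h2).1
            have hβ1 := (hβ j h2).2
            have hmaj0 : maj A j ⟨(j:ℕ)-k, lt_of_le_of_lt (Nat.sub_le _ _) j.isLt⟩ ≤ 0 := by
              apply maj_offdiag_nonpos hm hB hAB
              intro hq
              have := congrArg Fin.val hq
              simp at this
              omega
            nlinarith
          · have hAvf : A ⟨(j:ℕ)-k, lt_of_le_of_lt (Nat.sub_le _ _) j.isLt⟩ f ≤ 0 :=
              hoff _ f hfv
            have hκ := Kcoef_nonneg hm hB hAB hk1 hβ j h2
            have : -A j f ≥ 0 := by linarith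
            nlinarith
        · rw [dif_neg h2]
          linarith
  linarith

lemma Pb_pos (hm : 2 ≤ m) {A B : Tensor m n} {η : ℝ}
    (hB : TNonneg B) (hAB : A = η • idT m n - B)
    {s k : ℕ} (hs1 : 1 ≤ s) (hk1 : 1 ≤ k)
    {α β : Fin n → ℝ}
    (hα : ∀ i : Fin n, (i : ℕ) + s < n → α i ∈ Set.Icc (0:ℝ) 1)
    (hβ : ∀ i : Fin n, k ≤ (i : ℕ) → β i ∈ Set.Icc (0:ℝ) 1)
    {b : Fin n → ℝ} (hb : ∀ i, 0 < b i) :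
    ∀ j, 0 < (Pmat A α β s k).mulVec b j := by
  intro j
  have hrepr : (Pmat A α β s k).mulVec b j = ∑ j₂, Pmat A α β s k j j₂ * b j₂ := rfl
  rw [hrepr, Psum, Ssum, Ksum]
  have hTS : 0 ≤ (if h : (j:ℕ) + s < n then
      -(α j * maj A j ⟨(j:ℕ)+s, h⟩) * b ⟨(j:ℕ)+s, h⟩ else 0) := by
    by_cases h : (j:ℕ) + s < n
    · rw [dif_pos h]
      exact mul_nonneg (Scoef_nonneg hm hB hAB hs1 hα j h) (hb _).le
    · rw [dif_neg h]
  have hTK : 0 ≤ (if h : k ≤ (j:ℕ) then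
      -(β j * maj A j ⟨(j:ℕ)-k, lt_of_le_of_lt (Nat.sub_le _ _) j.isLt⟩)
        * b ⟨(j:ℕ)-k, lt_of_le_of_lt (Nat.sub_le _ _) j.isLt⟩ else 0) := by
    by_cases h : k ≤ (j:ℕ)
    · rw [dif_pos h]
      exact mul_nonneg (Kcoef_nonneg hm hB hAB hk1 hβ j h) (hb _).le
    · rw [dif_neg h]
  linarith [hb j]

end PrecondSign
theorem stmt1 {m n : ℕ} (hm : 2 ≤ m) (hn : 1 ≤ n)
    (A : Tensor m n) (hA : StrongM A) (hdiag : UnitDiag A)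
    (s k : ℕ) (hs1 : 1 ≤ s) (hs2 : s ≤ n - 1) (hk1 : 1 ≤ k) (hk2 : k ≤ n - 1)
    (α β : Fin n → ℝ)
    (hα : ∀ i : Fin n, (i : ℕ) + s < n → α i ∈ Set.Icc (0 : ℝ) 1)
    (hβ : ∀ i : Fin n, k ≤ (i : ℕ) → β i ∈ Set.Icc (0 : ℝ) 1)
    (b : Fin n → ℝ) (hb : ∀ i, 0 < b i) :
    (∃! x : Fin n → ℝ, (∀ i, 0 < x i) ∧
        tmul (precond A α β s k) x = (Pmat A α β s k).mulVec b) ∧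
    (∀ x : Fin n → ℝ, (∀ i, 0 < x i) →
        (tmul (precond A α β s k) x = (Pmat A α β s k).mulVec b ↔ tmul A x = b)) := by
  obtain ⟨η, B, hB, hρ, hAB⟩ := hA
  have hη : 0 < η := lt_of_le_of_lt (rho_nonneg B) hρ
  have heig := no_big_eig hη hρ
  -- the unique positive solution of the original system
  obtain ⟨x₀, hx₀pos, hx₀eq⟩ := exists_pos_sol hm hn B hB hη heig b hb
  have hx₀A : tmul A x₀ = b := by
    funext i
    rw [tmul_decomp hm hAB x₀ i, hx₀eq i]
    ring
  -- relation between the preconditioned system and the original one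
  have hPrel : ∀ x : Fin n → ℝ, ∀ i,
      tmul (precond A α β s k) x i = ∑ j, Pmat A α β s k i j * tmul A x j := by
    intro x i
    exact tmul_mmul (Pmat A α β s k) A x i
  have hmulVec : ∀ (v : Fin n → ℝ) (i : Fin n),
      (Pmat A α β s k).mulVec v i = ∑ j, Pmat A α β s k i j * v j := fun v i => rfl
  have hforward : ∀ x : Fin n → ℝ, tmul A x = b →
      tmul (precond A α β s k) x = (Pmat A α β s k).mulVec b := by
    intro x hx
    funext i
    rw [hPrel x i, hmulVec b i]
    congr 1
    funext j
    rw [congrFun hx j]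
  have hx₀P : tmul (precond A α β s k) x₀ = (Pmat A α β s k).mulVec b :=
    hforward x₀ hx₀A
  -- uniqueness of positive solutions of the preconditioned system
  have hZP := precond_offdiag_nonpos hm hB hAB hdiag hs1 hk1 hα hβ
  have hPb := Pb_pos hm hB hAB hs1 hk1 hα hβ hb
  have huniqP : ∀ x : Fin n → ℝ, (∀ i, 0 < x i) →
      tmul (precond A α β s k) x = (Pmat A α β s k).mulVec b → x = x₀ := by
    intro x hx hxP
    exact z_uniq hm hn (precond A α β s k) hZP hPb hx hx₀pos
      (fun i => congrFun hxP i) (fun i => congrFun hx₀P i)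
  constructor
  · exact ⟨x₀, ⟨hx₀pos, hx₀P⟩, fun y hy => huniqP y hy.1 hy.2⟩
  · intro x hx
    constructor
    · intro hxP
      rw [huniqP x hx hxP]
      exact hx₀A
    · exact hforward x

end

end MultilinearPaper
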